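/- Under the setting of the soundness theorem, the minimizer A* satisfies A* = A_inc ∩ I, i.e., the minimal-attribution set achieving the same predictive information is exactly the set of truly predictive features within A_inc. -/
import Mathlib


theorem stmt_5 {α : Type*} [DecidableEq α] (F I A Ainc Astar : Finset α)
    (φ η : α → ℝ) (hφ : ∀ x ∈ F, 0 ≤ φ x) (hη : ∀ x ∈ F, 0 ≤ η x)
    (hI : I = F.filter (fun x => 0 < φ x))
    (hA : A = F.filter (fun x => 0 < η x))
    (hAinc : Ainc ⊆ A)
    (hne : (Ainc ∩ I).Nonempty)
    (hmem : Astar ⊆ Ainc ∧ ∑ x ∈ Astar ∩ I, φ x = ∑ x ∈ Ainc ∩ I, φ x)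
    (hmin : ∀ S ⊆ Ainc, (∑ x ∈ S ∩ I, φ x = ∑ x ∈ Ainc ∩ I, φ x) →
      ∑ x ∈ Astar, η x ≤ ∑ x ∈ S, η x) :
    Astar = Ainc ∩ I := by
  obtain ⟨hsub, hsum⟩ := hmem
  have hφpos : ∀ x ∈ I, 0 < φ x := by
    intro x hx; rw [hI] at hx; exact (Finset.mem_filter.mp hx).2
  have hηpos : ∀ x ∈ A, 0 < η x := by
    intro x hx; rw [hA] at hx; exact (Finset.mem_filter.mp hx).2
  -- Step 1: Astar ∩ I = Ainc ∩ I
  have hsub1 : Astar ∩ I ⊆ Ainc ∩ I :=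
    Finset.inter_subset_inter hsub (Finset.Subset.refl _)
  have hdiff : ∑ x ∈ (Ainc ∩ I) \ (Astar ∩ I), φ x = 0 := by
    have := Finset.sum_sdiff (f := φ) hsub1
    linarith
  have heq1 : Astar ∩ I = Ainc ∩ I := by
    have hempty : (Ainc ∩ I) \ (Astar ∩ I) = ∅ := by
      by_contra h
      obtain ⟨x, hx⟩ := Finset.nonempty_of_ne_empty h
      have hxI : x ∈ I := (Finset.mem_inter.mp (Finset.mem_sdiff.mp hx).1).2
      have hpos := hφpos x hxI
      have hnonneg : ∀ y ∈ (Ainc ∩ I) \ (Astar ∩ I), 0 ≤ φ y := by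
        intro y hy
        exact le_of_lt (hφpos y (Finset.mem_inter.mp (Finset.mem_sdiff.mp hy).1).2)
      have := Finset.sum_eq_zero_iff_of_nonneg hnonneg |>.mp hdiff x hx
      linarith
    exact Finset.Subset.antisymm hsub1 (by
      intro x hx
      by_contra hxn
      exact absurd (Finset.mem_sdiff.mpr ⟨hx, hxn⟩) (by simp [hempty]))
  -- Step 2: minimality against S = Ainc ∩ I
  have hS : ∑ x ∈ (Ainc ∩ I) ∩ I, φ x = ∑ x ∈ Ainc ∩ I, φ x := by
    rw [Finset.inter_assoc, Finset.inter_self]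
  have hle := hmin (Ainc ∩ I) Finset.inter_subset_left hS
  have hsub2 : Ainc ∩ I ⊆ Astar := by
    rw [← heq1]; exact Finset.inter_subset_left
  have hdiff2 : ∑ x ∈ Astar \ (Ainc ∩ I), η x ≤ 0 := by
    have := Finset.sum_sdiff (f := η) hsub2
    linarith
  have hempty2 : Astar \ (Ainc ∩ I) = ∅ := by
    by_contra h
    obtain ⟨x, hx⟩ := Finset.nonempty_of_ne_empty h
    have hxA : x ∈ A := hAinc (hsub (Finset.mem_sdiff.mp hx).1)
    have hnonneg : ∀ y ∈ Astar \ (Ainc ∩ I), 0 ≤ η y := by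
      intro y hy
      exact le_of_lt (hηpos y (hAinc (hsub (Finset.mem_sdiff.mp hy).1)))
    have hzero : ∑ x ∈ Astar \ (Ainc ∩ I), η x = 0 :=
      le_antisymm hdiff2 (Finset.sum_nonneg hnonneg)
    have := Finset.sum_eq_zero_iff_of_nonneg hnonneg |>.mp hzero x hx
    have := hηpos x hxA
    linarith
  apply Finset.Subset.antisymm _ hsub2
  intro x hx
  by_contra hxn
  exact absurd (Finset.mem_sdiff.mpr ⟨hx, hxn⟩) (by simp [hempty2])
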